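/- Let A be a matrix in SU(1,1;ℂ) with first row (a,b), and let z ∈ ℂ with |z| < 1. Then η(A)·ζ(z) = ζ(A·z), where A·z = (a·z + b)/(b̄·z + ā); that is, the map η is compatible with stereographic projection from the conformal disk model to the hyperboloid model of the hyperbolic plane. -/

import Mathlib

open Matrix

noncomputable section

/-- The matrix `J = diag(1, -1)` in `M₂(ℂ)`. -/
def Jc : Matrix (Fin 2) (Fin 2) ℂ := !![1, 0; 0, -1]

/-- `SU(1,1;ℂ) = {A ∈ M₂(ℂ) : A*JA = J and det A = 1}`. -/
def SU11C : Set (Matrix (Fin 2) (Fin 2) ℂ) := {A | Aᴴ * Jc * A = Jc ∧ A.det = 1}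

/-- The double covering map `η : SU(1,1;ℂ) → SO⁺(2,1)`, written with
`a = A₀₀ = a₁ + a₂ i` and `b = A₀₁ = b₁ + b₂ i`. -/
def eta (A : Matrix (Fin 2) (Fin 2) ℂ) : Matrix (Fin 3) (Fin 3) ℝ :=
  let a1 := (A 0 0).re; let a2 := (A 0 0).im
  let b1 := (A 0 1).re; let b2 := (A 0 1).im
  !![1 - 2*a2^2 + 2*b1^2, -2*a1*a2 + 2*b1*b2, 2*a1*b1 - 2*a2*b2;
     2*a1*a2 + 2*b1*b2, 1 - 2*a2^2 + 2*b2^2, 2*a1*b2 + 2*a2*b1;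
     2*a1*b1 + 2*a2*b2, 2*a1*b2 - 2*a2*b1, 1 + 2*b1^2 + 2*b2^2]

/-- Stereographic projection ζ : B² → H² ⊆ ℝ³ from the conformal disk model to the
hyperboloid model of the hyperbolic plane. -/
def zeta (z : ℂ) : Fin 3 → ℝ :=
  ![2 * z.re / (1 - ‖z‖ ^ 2),
    2 * z.im / (1 - ‖z‖ ^ 2),
    (1 + ‖z‖ ^ 2) / (1 - ‖z‖ ^ 2)]

/-! The point ζ(v/u) depends on (v, u) only through the quadratic vector
ζ̂(v, u) = (2 Re(v ū), 2 Im(v ū), |u|² + |v|²), namely ζ(v/u) = (|u|² − |v|²)⁻¹ ζ̂(v, u).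
When |a|² − |b|² = 1, η(A) is precisely the action of A on these quadratic vectors,
η(A) ζ̂(v, u) = ζ̂(av + bu, b̄v + āu), and the normalising factor is invariant:
|b̄v + āu|² − |av + bu|² = (|a|² − |b|²)(|u|² − |v|²). Take (v, u) = (z, 1). -/

open Complex hiding eta
open ComplexConjugate

theorem Jc_mul_Jc : Jc * Jc = 1 := by
  rw [Jc, Matrix.one_fin_two]
  norm_num [Matrix.mul_fin_two]

theorem mul_Jc_mul_conjTranspose {A : Matrix (Fin 2) (Fin 2) ℂ} (h : Aᴴ * Jc * A = Jc) :
    A * Jc * Aᴴ = Jc := by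
  have hleft : Jc * Aᴴ * Jc * A = 1 := by
    rw [Matrix.mul_assoc, Matrix.mul_assoc, ← Matrix.mul_assoc Aᴴ, h, Jc_mul_Jc]
  calc A * Jc * Aᴴ = A * (Jc * Aᴴ * Jc) * Jc := by
        simp only [Matrix.mul_assoc, Jc_mul_Jc, Matrix.mul_one]
    _ = Jc := by rw [mul_eq_one_comm.mp hleft, Matrix.one_mul]

/-- The `(0,0)` entry of `Aᴴ * Jc * A = Jc` only involves the first column of `A`; the first row
comes from the `(0,0)` entry of `A * Jc * Aᴴ = Jc`. -/
theorem normSq_sub_normSq_eq_one {A : Matrix (Fin 2) (Fin 2) ℂ} (h : Aᴴ * Jc * A = Jc) :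
    normSq (A 0 0) - normSq (A 0 1) = 1 := by
  have h00 := congrArg re (congrFun (congrFun (mul_Jc_mul_conjTranspose h) 0) 0)
  simpa [Jc, Matrix.mul_apply, Fin.sum_univ_two, mul_conj, ← sub_eq_add_neg] using h00

def zetaHom (v u : ℂ) : Fin 3 → ℝ :=
  ![2 * (v * conj u).re, 2 * (v * conj u).im, normSq u + normSq v]

theorem zeta_div (v u : ℂ) (hu : u ≠ 0) :
    zeta (v / u) = (normSq u - normSq v)⁻¹ • zetaHom v u := by
  have hn : normSq u ≠ 0 := normSq_eq_zero.not.mpr hu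
  have hdiv : v / u = v * conj u / (normSq u : ℂ) := by
    rw [div_eq_div_iff hu (ofReal_ne_zero.mpr hn), mul_assoc, normSq_eq_conj_mul_self]
  have hden : 1 - ‖v / u‖ ^ 2 = (normSq u - normSq v) / normSq u := by
    rw [Complex.sq_norm, normSq_div]; field_simp
  have hnum : 1 + ‖v / u‖ ^ 2 = (normSq u + normSq v) / normSq u := by
    rw [Complex.sq_norm, normSq_div]; field_simp
  rw [zeta, hden, hnum, hdiv, div_ofReal_re, div_ofReal_im]
  simp only [← mul_div_assoc, div_div_div_cancel_right₀ hn]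
  ext i; fin_cases i <;> simp [zetaHom, div_eq_inv_mul]

theorem normSq_mobius_sub (a b v u : ℂ) :
    normSq (conj b * v + conj a * u) - normSq (a * v + b * u) =
      (normSq a - normSq b) * (normSq u - normSq v) := by
  simp only [normSq_apply, add_re, add_im, mul_re, mul_im, conj_re, conj_im]
  ring

theorem eta_mulVec_zetaHom (A : Matrix (Fin 2) (Fin 2) ℂ)
    (h : normSq (A 0 0) - normSq (A 0 1) = 1) (v u : ℂ) :
    eta A *ᵥ zetaHom v u =
      zetaHom (A 0 0 * v + A 0 1 * u) (conj (A 0 1) * v + conj (A 0 0) * u) := by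
  simp only [normSq_apply] at h
  ext i; fin_cases i <;>
    simp only [mulVec, dotProduct, eta, zetaHom, Fin.sum_univ_three, Fin.isValue, Fin.zero_eta,
      Fin.mk_one, Fin.reduceFinMk, of_apply, cons_val', cons_val_fin_one, cons_val_zero,
      cons_val_one, cons_val, neg_mul, mul_neg, sub_neg_eq_add, mul_re, mul_im, add_re, add_im,
      conj_re, conj_im, normSq_apply, map_add, map_mul, RingHomCompTriple.comp_apply,
      RingHom.id_apply]
  · linear_combination (-2 * (v.re * u.re + v.im * u.im)) * h
  · linear_combination (-2 * (v.im * u.re - v.re * u.im)) * h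
  · linear_combination (-(u.re ^ 2 + u.im ^ 2 + v.re ^ 2 + v.im ^ 2)) * h

theorem stmt19 (A : Matrix (Fin 2) (Fin 2) ℂ) (hA : A ∈ SU11C)
    (a b : ℂ) (ha : a = A 0 0) (hb : b = A 0 1)
    (z : ℂ) (hz : ‖z‖ < 1) :
    (eta A).mulVec (zeta z) = zeta ((a * z + b) / (star b * z + star a)) := by
  subst ha hb
  have hab : normSq (A 0 0) - normSq (A 0 1) = 1 := normSq_sub_normSq_eq_one hA.1
  have hdisk : 0 < 1 - normSq z := by
    rw [normSq_eq_norm_sq]; nlinarith [norm_nonneg z]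
  have hmob := normSq_mobius_sub (A 0 0) (A 0 1) z 1
  rw [hab, one_mul, map_one, mul_one, mul_one] at hmob
  have hu : conj (A 0 1) * z + conj (A 0 0) ≠ 0 := by
    intro h0
    rw [h0, map_zero] at hmob
    linarith [normSq_nonneg (A 0 0 * z + A 0 1)]
  have hzeta : zeta z = (1 - normSq z)⁻¹ • zetaHom z 1 := by
    simpa using zeta_div z 1 one_ne_zero
  rw [star_def, zeta_div _ _ hu, hmob, hzeta, mulVec_smul, eta_mulVec_zetaHom A hab]
  simp only [mul_one]
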